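/- Minimal cost right deep trees for star query (Theorem 4.1): For a star query with PKFK joins, let the cost of a right-deep-tree order without cross products be C(σ) when the order is T(R₀, R_{σ(0)}, …, R_{σ(n−1)}), and C_k(σ) when the order is T(R_k, R₀, R_{σ(0)}, …, R_{σ(n−2)}); by Lemma 4.1 every right-deep-tree order without cross products is of one of these two forms. Then for every right-deep-tree order without cross products there exists one of the n+1 candidate orders — T(R₀, R₁, …, Rₙ) or T(R_k, R₀, R₁, …, R_{k−1}, R_{k+1}, …, Rₙ) for 1 ≤ k ≤ n — whose cost equals the cost of the given order; in particular the minimum cost over all right-deep-tree orders without cross products is attained at one of these n+1 candidates. -/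
import Mathlib


open Finset

lemma cycleRange_inv_zero' {n : ℕ} (hn : 1 ≤ n) (k : Fin n) :
    ((Fin.cycleRange k)⁻¹ : Equiv.Perm (Fin n)) ⟨0, hn⟩ = k := by
  match n, hn, k with
  | (m+1), _, k =>
    rw [Equiv.Perm.inv_def, Equiv.symm_apply_eq]
    exact ((Fin.cycleRange_self k).trans (by ext; simp)).symm

/-- The fact table after the bitvector filters (semi-joins) from all dimension tables
are pushed down to it. -/
def factFiltered {α : Type*} {n : ℕ} {β : Fin n → Type*}
    (R₀ : Finset α) (R : ∀ i, Finset (β i))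
    (p : ∀ i, α → β i → Prop) [∀ i a b, Decidable (p i a b)] : Finset α :=
  R₀.filter fun a => ∀ i, ∃ b ∈ R i, p i a b

/-- The partial join `J(s)` of the filtered fact table with the dimension tables indexed
by `s`. -/
def starPartialJoin {α : Type*} {n : ℕ} {β : Fin n → Type*}
    (R₀ : Finset α) (R : ∀ i, Finset (β i))
    (p : ∀ i, α → β i → Prop) [∀ i a b, Decidable (p i a b)]
    (s : Finset (Fin n)) : Finset (α × (∀ i ∈ s, β i)) :=
  ((factFiltered R₀ R p) ×ˢ s.pi R).filter
    fun x => ∀ i (hi : i ∈ s), p i x.1 (x.2 i hi)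

/-- The set `{σ 0, σ 1, …, σ (k-1)}` of the first `k` dimension indices in the
enumeration `σ`. -/
def starPrefix {n : ℕ} (σ : Equiv.Perm (Fin n)) (k : ℕ) : Finset (Fin n) :=
  (Finset.univ.filter fun t : Fin n => (t : ℕ) < k).image σ

/-- The cost `C(σ)` of the right deep tree `T(R₀, R (σ 0), …, R (σ (n-1)))`. -/
def starCost {α : Type*} {n : ℕ} {β : Fin n → Type*}
    (R₀ : Finset α) (R : ∀ i, Finset (β i))
    (p : ∀ i, α → β i → Prop) [∀ i a b, Decidable (p i a b)]
    (σ : Equiv.Perm (Fin n)) : ℕ :=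
  (∑ i, (R i).card) + (factFiltered R₀ R p).card
    + ∑ k ∈ Finset.range n, (starPartialJoin R₀ R p (starPrefix σ (k + 1))).card

/-- `R₀''`: the fact table after the bitvector filters from every dimension table except
`R k` are pushed down to it. -/
def factFilteredExcept {α : Type*} {n : ℕ} {β : Fin n → Type*}
    (R₀ : Finset α) (R : ∀ i, Finset (β i))
    (p : ∀ i, α → β i → Prop) [∀ i a b, Decidable (p i a b)]
    (k : Fin n) : Finset α :=
  R₀.filter fun a => ∀ i, i ≠ k → ∃ b ∈ R i, p i a b

/-- `R k'`: the dimension table `R k` after the bitvector filter created from `R₀''` is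
pushed down to it. -/
def dimFiltered {α : Type*} {n : ℕ} {β : Fin n → Type*}
    (R₀ : Finset α) (R : ∀ i, Finset (β i))
    (p : ∀ i, α → β i → Prop) [∀ i a b, Decidable (p i a b)]
    (k : Fin n) : Finset (β k) :=
  (R k).filter fun b => ∃ a ∈ factFilteredExcept R₀ R p k, p k a b

/-- The partial join `J''(s)` of `R₀''` with the dimension tables indexed by `s`. -/
def starPartialJoinK {α : Type*} {n : ℕ} {β : Fin n → Type*}
    (R₀ : Finset α) (R : ∀ i, Finset (β i))
    (p : ∀ i, α → β i → Prop) [∀ i a b, Decidable (p i a b)]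
    (k : Fin n) (s : Finset (Fin n)) : Finset (α × (∀ i ∈ s, β i)) :=
  ((factFilteredExcept R₀ R p k) ×ˢ s.pi R).filter
    fun x => ∀ i (hi : i ∈ s), p i x.1 (x.2 i hi)

/-- The cost `C_k(σ)` of the right deep tree `T(R k, R₀, R (σ 1), …, R (σ (n-1)))`, where
the enumeration of `Fin n \ {k}` is encoded as a permutation `σ` with `σ 0 = k`. -/
def starCostK {α : Type*} {n : ℕ} {β : Fin n → Type*}
    (R₀ : Finset α) (R : ∀ i, Finset (β i))
    (p : ∀ i, α → β i → Prop) [∀ i a b, Decidable (p i a b)]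
    (k : Fin n) (σ : Equiv.Perm (Fin n)) : ℕ :=
  (∑ i ∈ Finset.univ.erase k, (R i).card) + (factFilteredExcept R₀ R p k).card
    + (dimFiltered R₀ R p k).card
    + ∑ j ∈ Finset.range n, (starPartialJoinK R₀ R p k (starPrefix σ (j + 1))).card

/-- Adjacency in the star join graph: the fact vertex `none` is adjacent to every
dimension vertex `some i`, and there are no other edges. -/
def starAdjO {n : ℕ} (a b : Option (Fin n)) : Prop :=
  (a = none ∧ b ≠ none) ∨ (b = none ∧ a ≠ none)

lemma card_starPartialJoin' {α : Type*} {n : ℕ} {β : Fin n → Type*}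
    (R₀ : Finset α) (R : ∀ i, Finset (β i))
    (p : ∀ i, α → β i → Prop) [∀ i a b, Decidable (p i a b)]
    (hkey : ∀ (i : Fin n) (a : α), ∀ b₁ ∈ R i, ∀ b₂ ∈ R i,
      p i a b₁ → p i a b₂ → b₁ = b₂) (s : Finset (Fin n)) :
    (starPartialJoin R₀ R p s).card = (factFiltered R₀ R p).card := by
  apply Finset.card_bij (fun x _ => x.1)
  · intro x hx
    simp only [starPartialJoin, Finset.mem_filter, Finset.mem_product] at hx
    exact hx.1.1
  · intro x hx y hy hxy
    simp only [starPartialJoin, Finset.mem_filter, Finset.mem_product, Finset.mem_pi] at hx hy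
    refine Prod.ext hxy ?_
    funext i hi
    exact hkey i x.1 (x.2 i hi) (hx.1.2 i hi) (y.2 i hi) (hy.1.2 i hi)
      (hx.2 i hi) (hxy ▸ hy.2 i hi)
  · intro a ha
    have ha' := ha
    simp only [factFiltered, Finset.mem_filter] at ha'
    have hu : ∀ i : Fin n, ∃! b, b ∈ R i ∧ p i a b := by
      intro i
      obtain ⟨b, hb, hpb⟩ := ha'.2 i
      exact ⟨b, ⟨hb, hpb⟩, fun b' hb' => hkey i a b' hb'.1 b hb hb'.2 hpb⟩
    refine ⟨(a, fun i _ => Finset.choose (p i a) (R i) (hu i)), ?_, rfl⟩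
    simp only [starPartialJoin, Finset.mem_filter, Finset.mem_product, Finset.mem_pi]
    exact ⟨⟨ha, fun i hi => Finset.choose_mem _ _ _⟩,
      fun i hi => Finset.choose_property _ _ _⟩

lemma card_starPartialJoinK' {α : Type*} {n : ℕ} {β : Fin n → Type*}
    (R₀ : Finset α) (R : ∀ i, Finset (β i))
    (p : ∀ i, α → β i → Prop) [∀ i a b, Decidable (p i a b)]
    (hkey : ∀ (i : Fin n) (a : α), ∀ b₁ ∈ R i, ∀ b₂ ∈ R i,
      p i a b₁ → p i a b₂ → b₁ = b₂) (k : Fin n) (s : Finset (Fin n)) (hks : k ∈ s) :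
    (starPartialJoinK R₀ R p k s).card = (factFiltered R₀ R p).card := by
  apply Finset.card_bij (fun x _ => x.1)
  · intro x hx
    simp only [starPartialJoinK, Finset.mem_filter, Finset.mem_product,
      factFilteredExcept, Finset.mem_pi] at hx
    simp only [factFiltered, Finset.mem_filter]
    refine ⟨hx.1.1.1, fun i => ?_⟩
    by_cases hik : i = k
    · subst hik
      exact ⟨x.2 i hks, hx.1.2 i hks, hx.2 i hks⟩
    · exact hx.1.1.2 i hik
  · intro x hx y hy hxy
    simp only [starPartialJoinK, Finset.mem_filter, Finset.mem_product, Finset.mem_pi] at hx hy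
    refine Prod.ext hxy ?_
    funext i hi
    exact hkey i x.1 (x.2 i hi) (hx.1.2 i hi) (y.2 i hi) (hy.1.2 i hi)
      (hx.2 i hi) (hxy ▸ hy.2 i hi)
  · intro a ha
    have ha' := ha
    simp only [factFiltered, Finset.mem_filter] at ha'
    have hu : ∀ i : Fin n, ∃! b, b ∈ R i ∧ p i a b := by
      intro i
      obtain ⟨b, hb, hpb⟩ := ha'.2 i
      exact ⟨b, ⟨hb, hpb⟩, fun b' hb' => hkey i a b' hb'.1 b hb hb'.2 hpb⟩
    refine ⟨(a, fun i _ => Finset.choose (p i a) (R i) (hu i)), ?_, rfl⟩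
    simp only [starPartialJoinK, Finset.mem_filter, Finset.mem_product, Finset.mem_pi,
      factFilteredExcept]
    exact ⟨⟨⟨ha'.1, fun i _ => ha'.2 i⟩, fun i hi => Finset.choose_mem _ _ _⟩,
      fun i hi => Finset.choose_property _ _ _⟩


/-- **Minimal cost right deep trees for star query (Theorem 4.1).**
For a star query with PKFK joins, every right-deep-tree order without cross products is
either of the form `T(R₀, R (σ 0), …, R (σ (n-1)))`, whose cost equals the cost of the
candidate `T(R₀, R 1, …, R n)` (i.e. `σ = 1`, the identity permutation), or of the form
`T(R k, R₀, R (ρ 1), …, R (ρ (n-1)))` with `ρ 0 = k`, whose cost equals the cost of the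
candidate `T(R k, R₀, R 1, …, R (k-1), R (k+1), …, R n)` (i.e. `ρ = (Fin.cycleRange k)⁻¹`).
Hence the minimum cost over all right-deep-tree orders without cross products is attained
at one of these `n + 1` candidates. -/
theorem star_min_cost_candidates {α : Type*} {n : ℕ} (hn : 1 ≤ n)
    {β : Fin n → Type*}
    (R₀ : Finset α) (R : ∀ i, Finset (β i))
    (p : ∀ i, α → β i → Prop) [∀ i a b, Decidable (p i a b)]
    (hkey : ∀ (i : Fin n) (a : α), ∀ b₁ ∈ R i, ∀ b₂ ∈ R i,
      p i a b₁ → p i a b₂ → b₁ = b₂) :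
    ∀ X : Fin (n + 1) → Option (Fin n), Function.Bijective X →
      (∀ k : Fin (n + 1), 0 < (k : ℕ) → ∃ j, j < k ∧ starAdjO (X k) (X j)) →
      (∃ σ : Equiv.Perm (Fin n),
          X 0 = none ∧ (∀ j : Fin n, X j.succ = some (σ j)) ∧
          starCost R₀ R p σ = starCost R₀ R p 1) ∨
        (∃ (k : Fin n) (ρ : Equiv.Perm (Fin n)),
          ρ ⟨0, hn⟩ = k ∧ X 0 = some k ∧ X 1 = none ∧
          (∀ j : Fin n, 0 < (j : ℕ) → X j.succ = some (ρ j)) ∧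
          starCostK R₀ R p k ρ = starCostK R₀ R p k (Fin.cycleRange k)⁻¹) := by
  intro X hX hadj
  cases h0 : X 0 with
  | none =>
    left
    have hs : ∀ j : Fin n, (X j.succ).isSome := by
      intro j
      cases h : X j.succ with
      | some b => rfl
      | none => exact absurd (hX.injective (h.trans h0.symm)) (Fin.succ_ne_zero j)
    have hfinj : Function.Injective (fun j : Fin n => (X j.succ).get (hs j)) := by
      intro j j' hjj'
      have h2 : X j.succ = X j'.succ := by
        rw [← Option.some_get (hs j), ← Option.some_get (hs j')]
        exact congrArg some hjj'
      exact Fin.succ_injective n (hX.injective h2)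
    refine ⟨Equiv.ofBijective _ (Finite.injective_iff_bijective.mp hfinj), rfl,
      fun j => (Option.some_get (hs j)).symm, ?_⟩
    unfold starCost
    congr 1
    exact Finset.sum_congr rfl fun j _ => by
      rw [card_starPartialJoin' R₀ R p hkey, card_starPartialJoin' R₀ R p hkey]
  | some k =>
    right
    have h1v : ((1 : Fin (n + 1)) : ℕ) = 1 := by
      rw [Fin.val_one']
      exact Nat.mod_eq_of_lt (by omega)
    obtain ⟨j, hj, hadj1⟩ := hadj 1 (by rw [h1v]; exact Nat.one_pos)
    have hj0 : j = 0 := by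
      apply Fin.ext
      have h2 := Fin.lt_def.mp hj
      rw [h1v] at h2
      simp only [Fin.val_zero]
      omega
    rw [hj0, h0] at hadj1
    have hX1 : X 1 = none := by
      rcases hadj1 with ⟨h, _⟩ | ⟨h, _⟩
      · exact h
      · exact absurd h (by simp)
    have hsj : ∀ j : Fin n, (j : ℕ) ≠ 0 → (X j.succ).isSome := by
      intro j hjne
      cases h : X j.succ with
      | some b => rfl
      | none =>
        have h2 : j.succ = 1 := hX.injective (h.trans hX1.symm)
        have h3 : (j : ℕ) + 1 = ((1 : Fin (n + 1)) : ℕ) := by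
          rw [← Fin.val_succ, h2]
        rw [h1v] at h3
        omega
    set f : Fin n → Fin n := fun j =>
      if h : (j : ℕ) = 0 then k else (X j.succ).get (hsj j h) with hf
    have hnk : ∀ (j : Fin n) (h : (j : ℕ) ≠ 0), (X j.succ).get (hsj j h) ≠ k := by
      intro j h hc
      have : X j.succ = X 0 := by
        rw [← Option.some_get (hsj j h), hc, h0]
      exact Fin.succ_ne_zero j (hX.injective this)
    have hfinj : Function.Injective f := by
      intro j j' hjj'
      by_cases hj1 : (j : ℕ) = 0 <;> by_cases hj2 : (j' : ℕ) = 0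
      · exact Fin.ext (hj1.trans hj2.symm)
      · rw [hf] at hjj'; simp only [dif_pos hj1, dif_neg hj2] at hjj'
        exact absurd hjj'.symm (hnk j' hj2)
      · rw [hf] at hjj'; simp only [dif_pos hj2, dif_neg hj1] at hjj'
        exact absurd hjj' (hnk j hj1)
      · rw [hf] at hjj'; simp only [dif_neg hj1, dif_neg hj2] at hjj'
        have h2 : X j.succ = X j'.succ := by
          rw [← Option.some_get (hsj j hj1), ← Option.some_get (hsj j' hj2)]
          exact congrArg some hjj'
        exact Fin.succ_injective n (hX.injective h2)
    set ρ : Equiv.Perm (Fin n) :=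
      Equiv.ofBijective f (Finite.injective_iff_bijective.mp hfinj) with hρ
    have hρ0 : ρ ⟨0, hn⟩ = k := by
      show f ⟨0, hn⟩ = k
      rw [hf]
      exact dif_pos rfl
    have hcyc : ((Fin.cycleRange k)⁻¹ : Equiv.Perm (Fin n)) ⟨0, hn⟩ = k :=
      cycleRange_inv_zero' hn k
    have hmem : ∀ (τ : Equiv.Perm (Fin n)), τ ⟨0, hn⟩ = k → ∀ j : ℕ,
        k ∈ starPrefix τ (j + 1) := by
      intro τ hτ j
      simp only [starPrefix, Finset.mem_image]
      exact ⟨⟨0, hn⟩, by simp, hτ⟩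
    refine ⟨k, ρ, hρ0, rfl, hX1, ?_, ?_⟩
    · intro j hjpos
      show X j.succ = some (f j)
      rw [hf]
      simp only [dif_neg (Nat.pos_iff_ne_zero.mp hjpos)]
      exact (Option.some_get (hsj j (Nat.pos_iff_ne_zero.mp hjpos))).symm
    · unfold starCostK
      congr 1
      exact Finset.sum_congr rfl fun j _ => by
        rw [card_starPartialJoinK' R₀ R p hkey k _ (hmem ρ hρ0 j),
          card_starPartialJoinK' R₀ R p hkey k _ (hmem _ hcyc j)]
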